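/- For constants cᵢ ∈ ℝ, δᵢ > 0, Lᵢ ≤ Uᵢ (extended reals), the function H(η) = ∑ᵢ min{Uᵢ, max{Lᵢ, cᵢ + δᵢ⁻¹η}} is continuous and nondecreasing in η ∈ ℝ, and for any s with ∑Lᵢ < s < ∑Uᵢ the preimage H⁻¹({s}) is a nonempty closed interval; moreover the clipped vector (Πᵢ(cᵢ + δᵢ⁻¹η))ᵢ is constant as η ranges over H⁻¹({s}). -/

import Mathlib

/-!
Read in `EReal`, each summand `η ↦ Πᵢ(cᵢ + η / δᵢ)` is continuous and nondecreasing and tends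
to `Lᵢ` at `-∞` and to `Uᵢ` at `+∞`. As no `Lᵢ` is `⊤` and no `Uᵢ` is `⊥`, these limits can be
added, so `H` runs from `∑ Lᵢ` to `∑ Uᵢ` and the intermediate value theorem hits every `s`
strictly in between. A level set of a continuous monotone function is a closed interval, and a
sum of nondecreasing functions takes the same value at two points only if every summand does.
-/

/-- Clip a real number to the (possibly infinite) interval `[l, u]`. -/
noncomputable def clipEReal (l u : EReal) (y : ℝ) : ℝ :=
  (max l (min u (y : EReal))).toReal

open Filter Topology

lemma EReal.coe_finset_sum {ι : Type*} (s : Finset ι) (f : ι → ℝ) :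
    ((∑ i ∈ s, f i : ℝ) : EReal) = ∑ i ∈ s, (f i : EReal) :=
  map_sum (⟨⟨Real.toEReal, EReal.coe_zero⟩, EReal.coe_add⟩ : ℝ →+ EReal) f s

lemma EReal.tendsto_finset_sum_of_ne_top {ι α : Type*} {l : Filter α} {f : ι → α → EReal}
    {a : ι → EReal} (s : Finset ι) (hf : ∀ i ∈ s, Tendsto (f i) l (𝓝 (a i)))
    (ha : ∀ i ∈ s, a i ≠ ⊤) : Tendsto (fun x ↦ ∑ i ∈ s, f i x) l (𝓝 (∑ i ∈ s, a i)) := by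
  induction s using Finset.cons_induction with
  | empty => simpa using tendsto_const_nhds
  | cons j s _ ih =>
    simp only [Finset.forall_mem_cons] at hf ha
    have hsum : ∑ i ∈ s, a i ≠ ⊤ := Finset.sum_induction a (· ≠ ⊤)
      (fun _ _ ↦ EReal.add_ne_top) EReal.zero_ne_top ha.2
    simp only [Finset.sum_cons]
    exact (EReal.continuousAt_add (.inl ha.1) (.inr hsum)).tendsto.comp
      (hf.1.prodMk_nhds (ih hf.2 ha.2))

lemma EReal.tendsto_finset_sum_of_ne_bot {ι α : Type*} {l : Filter α} {f : ι → α → EReal}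
    {a : ι → EReal} (s : Finset ι) (hf : ∀ i ∈ s, Tendsto (f i) l (𝓝 (a i)))
    (ha : ∀ i ∈ s, a i ≠ ⊥) : Tendsto (fun x ↦ ∑ i ∈ s, f i x) l (𝓝 (∑ i ∈ s, a i)) := by
  induction s using Finset.cons_induction with
  | empty => simpa using tendsto_const_nhds
  | cons j s _ ih =>
    simp only [Finset.forall_mem_cons] at hf ha
    have hsum : ∑ i ∈ s, a i ≠ ⊥ := Finset.sum_induction a (· ≠ ⊥)
      (fun _ _ hx hy ↦ EReal.add_ne_bot_iff.2 ⟨hx, hy⟩) EReal.zero_ne_bot ha.2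
    simp only [Finset.sum_cons]
    exact (EReal.continuousAt_add (.inr hsum) (.inl ha.1)).tendsto.comp
      (hf.1.prodMk_nhds (ih hf.2 ha.2))

section clipEReal

variable {l u : EReal}

lemma coe_clipEReal (hl : l ≠ ⊤) (hu : u ≠ ⊥) (y : ℝ) :
    (clipEReal l u y : EReal) = max l (min u y) := by
  refine EReal.coe_toReal (ne_top_of_le_ne_top ?_ (max_le_max_left l (min_le_right u _)))
    (ne_bot_of_le_ne_bot ?_ (le_max_right _ _))
  · exact max_ne_top hl (EReal.coe_ne_top y)
  · exact (lt_min hu.bot_lt (EReal.bot_lt_coe y)).ne'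

lemma continuous_clipEReal (hl : l ≠ ⊤) (hu : u ≠ ⊥) : Continuous (clipEReal l u) := by
  rw [EReal.isEmbedding_coe.continuous_iff, Function.comp_def]
  simp only [coe_clipEReal hl hu]
  exact continuous_const.max (continuous_const.min continuous_coe_real_ereal)

lemma monotone_clipEReal (hl : l ≠ ⊤) (hu : u ≠ ⊥) : Monotone (clipEReal l u) := by
  intro y z hyz
  rw [← EReal.coe_le_coe_iff, coe_clipEReal hl hu, coe_clipEReal hl hu]
  gcongr

lemma tendsto_clipEReal_atBot (hl : l ≠ ⊤) (hu : u ≠ ⊥) :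
    Tendsto (fun y ↦ (clipEReal l u y : EReal)) atBot (𝓝 l) := by
  simp only [coe_clipEReal hl hu]
  have hcont : Continuous fun x : EReal ↦ max l (min u x) :=
    continuous_const.max (continuous_const.min continuous_id)
  simpa [Function.comp_def] using (hcont.tendsto ⊥).comp EReal.tendsto_coe_atBot

lemma tendsto_clipEReal_atTop (hl : l ≠ ⊤) (hu : u ≠ ⊥) (hlu : l ≤ u) :
    Tendsto (fun y ↦ (clipEReal l u y : EReal)) atTop (𝓝 u) := by
  simp only [coe_clipEReal hl hu]
  have hcont : Continuous fun x : EReal ↦ max l (min u x) :=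
    continuous_const.max (continuous_const.min continuous_id)
  simpa [Function.comp_def, hlu] using (hcont.tendsto ⊤).comp EReal.tendsto_coe_atTop

end clipEReal

lemma Finset.eq_of_sum_eq_of_monotone {ι α M : Type*} [LinearOrder α]
    [AddCommMonoid M] [PartialOrder M] [IsOrderedCancelAddMonoid M] {s : Finset ι}
    {f : ι → α → M} (hf : ∀ i ∈ s, Monotone (f i)) {x y : α}
    (h : ∑ i ∈ s, f i x = ∑ i ∈ s, f i y) : ∀ i ∈ s, f i x = f i y := by
  rcases le_total x y with hxy | hyx
  · exact (Finset.sum_eq_sum_iff_of_le fun i hi ↦ hf i hi hxy).1 h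
  · exact fun i hi ↦ ((Finset.sum_eq_sum_iff_of_le fun i hi ↦ hf i hi hyx).1 h.symm i hi).symm

lemma Continuous.exists_eq_of_tendsto_ereal {f : ℝ → ℝ} (hf : Continuous f) {a b : EReal}
    (ha : Tendsto (fun x ↦ (f x : EReal)) atBot (𝓝 a))
    (hb : Tendsto (fun x ↦ (f x : EReal)) atTop (𝓝 b)) {s : ℝ} (has : a < s) (hsb : s < b) :
    ∃ x, f x = s := by
  obtain ⟨x, hx⟩ := (ha.eventually (gt_mem_nhds has)).exists
  obtain ⟨y, hy⟩ := (hb.eventually (lt_mem_nhds hsb)).exists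
  exact intermediate_value_univ x y hf
    ⟨EReal.coe_le_coe_iff.1 hx.le, EReal.coe_le_coe_iff.1 hy.le⟩

/-- The aggregate clipped response `H(η) = ∑ᵢ Πᵢ(cᵢ + δᵢ⁻¹η)` is continuous and
nondecreasing; for `∑Lᵢ < s < ∑Uᵢ` its level set `H⁻¹({s})` is a nonempty closed
interval, on which the clipped vector is constant. -/
theorem stmt16 {n : ℕ} (c δ : Fin n → ℝ) (hδ : ∀ i, 0 < δ i)
    (L U : Fin n → EReal) (hL : ∀ i, L i ≠ ⊤) (hU : ∀ i, U i ≠ ⊥)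
    (hLU : ∀ i, L i ≤ U i)
    (H : ℝ → ℝ)
    (hH : H = fun η => ∑ i, clipEReal (L i) (U i) (c i + η / δ i)) :
    Continuous H ∧ Monotone H ∧
    ∀ s : ℝ, (∑ i, L i) < (s : EReal) → (s : EReal) < (∑ i, U i) →
      (H ⁻¹' {s}).Nonempty ∧ IsClosed (H ⁻¹' {s}) ∧ (H ⁻¹' {s}).OrdConnected ∧
      ∀ η₁ ∈ H ⁻¹' {s}, ∀ η₂ ∈ H ⁻¹' {s}, ∀ i,
        clipEReal (L i) (U i) (c i + η₁ / δ i) =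
          clipEReal (L i) (U i) (c i + η₂ / δ i) := by
  have hmono (i : Fin n) : Monotone fun η ↦ clipEReal (L i) (U i) (c i + η / δ i) :=
    (monotone_clipEReal (hL i) (hU i)).comp ((monotone_id.div_const (hδ i).le).const_add _)
  have hH_cont : Continuous H := hH ▸ continuous_finsetSum _ fun i _ ↦
    (continuous_clipEReal (hL i) (hU i)).comp (by fun_prop)
  have hH_mono : Monotone H := hH ▸ Monotone.finsetSum fun i _ ↦ hmono i
  have hH_atBot : Tendsto (fun η ↦ (H η : EReal)) atBot (𝓝 (∑ i, L i)) := by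
    simp only [hH, EReal.coe_finset_sum]
    refine EReal.tendsto_finset_sum_of_ne_top _ (fun i _ ↦ ?_) fun i _ ↦ hL i
    exact (tendsto_clipEReal_atBot (hL i) (hU i)).comp
      (tendsto_atBot_add_const_left _ _ (tendsto_id.atBot_div_const (hδ i)))
  have hH_atTop : Tendsto (fun η ↦ (H η : EReal)) atTop (𝓝 (∑ i, U i)) := by
    simp only [hH, EReal.coe_finset_sum]
    refine EReal.tendsto_finset_sum_of_ne_bot _ (fun i _ ↦ ?_) fun i _ ↦ hU i
    exact (tendsto_clipEReal_atTop (hL i) (hU i) (hLU i)).comp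
      (tendsto_atTop_add_const_left _ _ (tendsto_id.atTop_div_const (hδ i)))
  refine ⟨hH_cont, hH_mono, fun s hLs hsU ↦ ⟨?_, isClosed_singleton.preimage hH_cont,
    Set.ordConnected_singleton.preimage_mono hH_mono, fun η₁ h₁ η₂ h₂ i ↦ ?_⟩⟩
  · exact hH_cont.exists_eq_of_tendsto_ereal hH_atBot hH_atTop hLs hsU
  · have hsum : H η₁ = H η₂ := h₁.trans h₂.symm
    simp only [hH] at hsum
    exact Finset.eq_of_sum_eq_of_monotone (fun i _ ↦ hmono i) hsum i (Finset.mem_univ i)
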